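/- Let G be a finite, connected, non-bipartite simple graph on vertex set V, and let A = (a_{i,j}) be a symmetric nonnegative matrix with a_{i,j} > 0 if and only if i and j are adjacent in G. Define weights d_i = Σ_{j ∈ N(i)} a_{i,j} and arrival rates α_i = d_i / Σ_{j ∈ V} d_j. Then for every nonempty independent set I of G, Σ_{i ∈ I} α_i < Σ_{j ∈ E(I)} α_j, where E(I) is the set of neighbors of I. -/

import Mathlib

/-!
If no neighbour of the independent set `I` had an edge leaving `I`, then `I ∪ E(I)` would be closed
under adjacency, hence everything by connectivity, and colouring `I` against its complement would
2-colour `G`. So some `j ∈ E(I)` has positive weight towards a vertex outside `I`. By symmetry of `A`,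
`d(I) = ∑_{i ∈ I} ∑_{j ∈ E(I)} a_{ij}` is the part of `d(E(I))` that goes back into `I`, and that edge
makes the inequality strict; dividing by the positive total `∑ d` gives `α(I) < α(E(I))`.
-/

open Finset

def IsIndep {V : Type*} (G : SimpleGraph V) (I : Finset V) : Prop :=
  ∀ i ∈ I, ∀ j ∈ I, ¬ G.Adj i j

def nbhd {V : Type*} [Fintype V] [DecidableEq V] (G : SimpleGraph V) [DecidableRel G.Adj]
    (A : Finset V) : Finset V :=
  A.biUnion fun i => G.neighborFinset i

theorem SimpleGraph.Connected.mem_of_adj_closed {V : Type*} {G : SimpleGraph V}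
    (hG : G.Connected) {S : Set V} {u : V} (hu : u ∈ S)
    (hS : ∀ v w, G.Adj v w → v ∈ S → w ∈ S) (v : V) : v ∈ S := by
  induction (SimpleGraph.reachable_iff_reflTransGen u v).1 (hG.preconnected u v) with
  | refl => exact hu
  | tail _ hadj ih => exact hS _ _ hadj ih

section Combinatorics

variable {V : Type*} {G : SimpleGraph V} {I : Finset V}

theorem mem_nbhd [Fintype V] [DecidableEq V] [DecidableRel G.Adj] {j : V} :
    j ∈ nbhd G I ↔ ∃ i ∈ I, G.Adj i j := by
  simp [nbhd]

theorem colorable_two_of_isIndep (hI : IsIndep G I)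
    (hcompl : ∀ u v, G.Adj u v → u ∉ I → v ∈ I) : G.Colorable 2 := by
  classical
  refine ⟨SimpleGraph.Coloring.mk (fun v => if v ∈ I then (0 : Fin 2) else 1) ?_⟩
  intro u v huv
  by_cases hu : u ∈ I <;> by_cases hv : v ∈ I
  · exact absurd huv (hI u hu v hv)
  · simp [hu, hv]
  · simp [hu, hv]
  · exact absurd (hcompl u v huv hu) hv

theorem exists_mem_nbhd_adj_notMem [Fintype V] [DecidableEq V] [DecidableRel G.Adj]
    (hG : G.Connected) (hnb : ¬ G.Colorable 2) (hne : I.Nonempty) (hI : IsIndep G I) :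
    ∃ j ∈ nbhd G I, ∃ k, G.Adj j k ∧ k ∉ I := by
  by_contra! hback
  obtain ⟨i₀, hi₀⟩ := hne
  have hcover : ∀ v, v ∈ I ∨ v ∈ nbhd G I := by
    refine hG.mem_of_adj_closed (S := {v | v ∈ I ∨ v ∈ nbhd G I}) (Or.inl hi₀) ?_
    rintro v w hvw (hv | hv)
    · exact Or.inr (mem_nbhd.2 ⟨v, hv, hvw⟩)
    · exact Or.inl (hback v hv w hvw)
  exact hnb (colorable_two_of_isIndep hI fun u v huv hu =>
    hback u ((hcover u).resolve_left hu) v huv)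

end Combinatorics

theorem sum_rowSum_lt_sum_rowSum {ι : Type*} [Fintype ι] (A : ι → ι → ℝ)
    (hsymm : ∀ i j, A i j = A j i) (hnonneg : ∀ i j, 0 ≤ A i j) {I J : Finset ι}
    (hsupp : ∀ i ∈ I, ∀ j ∉ J, A i j = 0) (hstrict : ∃ j ∈ J, ∃ k ∉ I, 0 < A j k) :
    ∑ i ∈ I, ∑ k, A i k < ∑ j ∈ J, ∑ k, A j k := by
  obtain ⟨j₀, hj₀, k₀, hk₀, hpos⟩ := hstrict
  calc ∑ i ∈ I, ∑ k, A i k = ∑ i ∈ I, ∑ j ∈ J, A i j :=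
        sum_congr rfl fun i hi =>
          (sum_subset (subset_univ J) fun j _ hj => hsupp i hi j hj).symm
    _ = ∑ j ∈ J, ∑ i ∈ I, A j i := by
        rw [sum_comm]
        exact sum_congr rfl fun j _ => sum_congr rfl fun i _ => hsymm i j
    _ < ∑ j ∈ J, ∑ k, A j k :=
        sum_lt_sum (fun j _ => sum_le_univ_sum_of_nonneg (hnonneg j))
          ⟨j₀, hj₀, sum_lt_sum_of_subset (subset_univ I) (mem_univ k₀) hk₀ hpos
            fun i _ _ => hnonneg j₀ i⟩

/-- Degree-proportional (weighted) arrival rates satisfy the stability condition: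
for every nonempty independent set `I`, `α(I) < α(E(I))`. -/
theorem stmt1 {V : Type*} [Fintype V] [DecidableEq V] (G : SimpleGraph V) [DecidableRel G.Adj]
    (hconn : G.Connected) (hnb : ¬ G.Colorable 2)
    (A : V → V → ℝ)
    (hsymm : ∀ i j, A i j = A j i)
    (hpos : ∀ i j, 0 < A i j ↔ G.Adj i j)
    (hnonneg : ∀ i j, 0 ≤ A i j)
    (d : V → ℝ) (hd : ∀ i, d i = ∑ j ∈ G.neighborFinset i, A i j)
    (α : V → ℝ) (hα : ∀ i, α i = d i / ∑ j, d j) :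
    ∀ I : Finset V, I.Nonempty → IsIndep G I →
      ∑ i ∈ I, α i < ∑ j ∈ nbhd G I, α j := by
  intro I hne hI
  have hzero : ∀ i j, ¬ G.Adj i j → A i j = 0 := fun i j h =>
    le_antisymm (not_lt.1 (mt (hpos i j).1 h)) (hnonneg i j)
  have hrow : ∀ i, d i = ∑ j, A i j := fun i => by
    rw [hd i]
    exact sum_subset (subset_univ _) fun j _ hj =>
      hzero i j fun h => hj ((G.mem_neighborFinset i j).2 h)
  have hdnonneg : ∀ i, 0 ≤ d i := fun i => hrow i ▸ sum_nonneg fun j _ => hnonneg i j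
  obtain ⟨j, hj, k, hjk, hk⟩ := exists_mem_nbhd_adj_notMem hconn hnb hne hI
  have hlt : ∑ i ∈ I, d i < ∑ j ∈ nbhd G I, d j := by
    simp only [hrow]
    exact sum_rowSum_lt_sum_rowSum A hsymm hnonneg
      (fun i hi j hj => hzero i j fun h => hj (mem_nbhd.2 ⟨i, hi, h⟩))
      ⟨j, hj, k, hk, (hpos j k).2 hjk⟩
  have htotal : 0 < ∑ i, d i :=
    ((sum_nonneg fun i _ => hdnonneg i).trans_lt hlt).trans_le
      (sum_le_univ_sum_of_nonneg hdnonneg)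
  simp only [hα, ← sum_div]
  exact div_lt_div_of_pos_right hlt htotal
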